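/- For d > 2 there exists C so that for all L ≥ 2: ∫_{[−(L+½)π,(L+½)π]^d} |k|² · ∏_{j=1}^d (1 ∨ |k_j|)^{−3} / (1 ∧ |k|²)² dk ≤ C log L. -/

import Mathlib

/-!
Write `w t = (1 ∨ |t|)⁻³`. Where `|k| ≥ 1` the integrand is `∑ᵢ kᵢ² ∏ⱼ w(kⱼ)`, and each summand
is a product of one-variable functions, so by Fubini its integral over the box is
`(∫ t² w) (∫ w)^(d-1) = O(log L)`. Where `|k| ≤ 1` the integrand is at most `|k|⁻²`, and AM-GM gives
`|k|² ≥ ∏ⱼ |kⱼ|^(2/d)`; so it is bounded by the product `∏ⱼ |kⱼ|^(-2/d)` over the unit cube, whose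
factors are integrable because `2/d < 1`.
-/

open MeasureTheory Set Real

noncomputable def cubicDecay (t : ℝ) : ℝ := ((max 1 |t|) ^ 3)⁻¹

noncomputable def singularWeight (e : ℝ) : ℝ → ℝ := (Icc (-1) 1).indicator fun t => |t| ^ (-e)

lemma cubicDecay_pos (t : ℝ) : 0 < cubicDecay t := by
  unfold cubicDecay; positivity

lemma cubicDecay_le_one (t : ℝ) : cubicDecay t ≤ 1 :=
  inv_le_one_of_one_le₀ (one_le_pow₀ (le_max_left _ _))

lemma cubicDecay_neg (t : ℝ) : cubicDecay (-t) = cubicDecay t := by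
  simp [cubicDecay]

lemma cubicDecay_of_abs_le_one {t : ℝ} (ht : |t| ≤ 1) : cubicDecay t = 1 := by
  simp [cubicDecay, max_eq_left ht]

lemma cubicDecay_of_one_le {t : ℝ} (ht : 1 ≤ t) : cubicDecay t = t ^ (-3 : ℤ) := by
  rw [cubicDecay, abs_of_nonneg (by linarith), max_eq_right ht, zpow_neg]
  norm_cast

lemma continuous_cubicDecay : Continuous cubicDecay :=
  ((continuous_const.max continuous_abs).pow 3).inv₀ fun t =>
    pow_ne_zero 3 (lt_of_lt_of_le one_pos (le_max_left 1 |t|)).ne'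

lemma integral_Icc_neg_self_of_even {f : ℝ → ℝ} (hf : ∀ x, f (-x) = f x) {M : ℝ} (hM : 0 ≤ M)
    (hfi : IntervalIntegrable f volume 0 M) :
    ∫ t in Icc (-M) M, f t = 2 * ∫ t in 0..M, f t := by
  have hneg : ∫ t in -M..0, f t = ∫ t in 0..M, f t := by
    simpa [hf] using (intervalIntegral.integral_comp_neg (a := 0) (b := M) f).symm
  have hfi' : IntervalIntegrable f volume (-M) 0 := by
    simpa [hf] using (IntervalIntegrable.iff_comp_neg (f := f)).1 hfi.symm
  rw [integral_Icc_eq_integral_Ioc, ← intervalIntegral.integral_of_le (by linarith),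
    ← intervalIntegral.integral_add_adjacent_intervals hfi' hfi, hneg, two_mul]

lemma integral_Icc_cubicDecay {M : ℝ} (hM : 1 ≤ M) :
    ∫ t in Icc (-M) M, cubicDecay t = 3 - (M ^ 2)⁻¹ := by
  have hint (a b : ℝ) := continuous_cubicDecay.intervalIntegrable (μ := volume) a b
  have h01 : ∫ t in 0..1, cubicDecay t = 1 := by
    rw [intervalIntegral.integral_congr (g := fun _ => 1)]
    · simp
    intro t ht
    rw [uIcc_of_le zero_le_one] at ht
    exact cubicDecay_of_abs_le_one (abs_le.2 ⟨by linarith [ht.1], ht.2⟩)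
  have h1M : ∫ t in 1..M, cubicDecay t = (1 - (M ^ 2)⁻¹) / 2 := by
    rw [intervalIntegral.integral_congr (g := fun t => t ^ (-3 : ℤ)), integral_zpow]
    · norm_num
      ring
    · exact Or.inr ⟨by decide, fun h => by linarith [(uIcc_of_le hM ▸ h).1]⟩
    · intro t ht
      exact cubicDecay_of_one_le (uIcc_of_le hM ▸ ht).1
  rw [integral_Icc_neg_self_of_even cubicDecay_neg (by linarith) (hint _ _),
    ← intervalIntegral.integral_add_adjacent_intervals (hint 0 1) (hint 1 M), h01, h1M]
  ring

lemma integral_Icc_sq_mul_cubicDecay {M : ℝ} (hM : 1 ≤ M) :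
    ∫ t in Icc (-M) M, t ^ 2 * cubicDecay t = 2 / 3 + 2 * log M := by
  have hint (a b : ℝ) : IntervalIntegrable (fun t => t ^ 2 * cubicDecay t) volume a b :=
    ((continuous_pow 2).mul continuous_cubicDecay).intervalIntegrable a b
  have h01 : ∫ t in 0..1, t ^ 2 * cubicDecay t = 1 / 3 := by
    rw [intervalIntegral.integral_congr (g := fun t => t ^ 2), integral_pow]
    · norm_num
    · intro t ht
      rw [uIcc_of_le zero_le_one] at ht
      simp [cubicDecay_of_abs_le_one (abs_le.2 ⟨by linarith [ht.1], ht.2⟩)]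
  have h1M : ∫ t in 1..M, t ^ 2 * cubicDecay t = log M := by
    rw [intervalIntegral.integral_congr (g := fun t => t⁻¹), integral_inv, div_one]
    · exact fun h => by linarith [(uIcc_of_le hM ▸ h).1]
    · intro t ht
      have ht : 1 ≤ t := (uIcc_of_le hM ▸ ht).1
      simp only [cubicDecay_of_one_le ht]
      field_simp
  rw [integral_Icc_neg_self_of_even (fun t => by rw [neg_sq, cubicDecay_neg]) (by linarith)
    (hint _ _), ← intervalIntegral.integral_add_adjacent_intervals (hint 0 1) (hint 1 M), h01, h1M]
  ring

lemma intervalIntegrable_abs_rpow {r : ℝ} (hr : -1 < r) (a b : ℝ) :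
    IntervalIntegrable (fun t => |t| ^ r) volume a b := by
  refine intervalIntegrable_of_even (fun t => by rw [abs_neg]) fun x hx => ?_
  refine (intervalIntegral.intervalIntegrable_rpow' hr).congr ?_
  intro t ht
  rw [uIoc_of_le hx.le] at ht
  simp [abs_of_pos ht.1]

lemma integral_abs_rpow_zero_one {r : ℝ} (hr : -1 < r) : ∫ t in 0..1, |t| ^ r = 1 / (r + 1) := by
  rw [intervalIntegral.integral_congr (g := fun t => t ^ r), integral_rpow (Or.inl hr),
    one_rpow, zero_rpow (by linarith)]
  · ring
  · intro t ht
    rw [uIcc_of_le zero_le_one] at ht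
    simp [abs_of_nonneg ht.1]

lemma singularWeight_nonneg (e t : ℝ) : 0 ≤ singularWeight e t :=
  indicator_nonneg (fun _ _ => by positivity) t

lemma singularWeight_of_abs_le_one (e : ℝ) {t : ℝ} (ht : |t| ≤ 1) :
    singularWeight e t = |t| ^ (-e) :=
  indicator_of_mem (mem_Icc.2 (abs_le.1 ht)) _

lemma integrable_singularWeight {e : ℝ} (he : e < 1) : Integrable (singularWeight e) :=
  (integrable_indicator_iff measurableSet_Icc).2 <|
    (intervalIntegrable_iff_integrableOn_Icc_of_le (by norm_num)).1
      (intervalIntegrable_abs_rpow (by linarith) _ _)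

lemma integral_singularWeight {e : ℝ} (he : e < 1) : ∫ t, singularWeight e t = 2 / (1 - e) := by
  rw [singularWeight, integral_indicator measurableSet_Icc,
    integral_Icc_neg_self_of_even (fun t => by rw [abs_neg]) zero_le_one
      (intervalIntegrable_abs_rpow (by linarith) _ _),
    integral_abs_rpow_zero_one (by linarith)]
  ring

section Box

variable {ι : Type*} [Fintype ι]

noncomputable def integrand (k : ι → ℝ) : ℝ :=
  (∑ i, k i ^ 2) * (∏ i, cubicDecay (k i)) / (min 1 (∑ i, k i ^ 2)) ^ 2

lemma integrand_nonneg (k : ι → ℝ) : 0 ≤ integrand k := by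
  have := Finset.prod_nonneg fun i (_ : i ∈ Finset.univ) => (cubicDecay_pos (k i)).le
  unfold integrand
  positivity

lemma prod_abs_rpow_le_sum_sq [Nonempty ι] (k : ι → ℝ) :
    ∏ i, |k i| ^ (2 / Fintype.card ι : ℝ) ≤ ∑ i, k i ^ 2 := by
  have hn : (1 : ℝ) ≤ Fintype.card ι := by exact_mod_cast Fintype.card_pos
  calc ∏ i, |k i| ^ (2 / Fintype.card ι : ℝ)
      = ∏ i, (k i ^ 2) ^ (Fintype.card ι : ℝ)⁻¹ := by
        refine Finset.prod_congr rfl fun i _ => ?_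
        rw [← sq_abs, ← rpow_natCast, ← rpow_mul (abs_nonneg _)]
        norm_num [div_eq_mul_inv]
    _ ≤ ∑ i, (Fintype.card ι : ℝ)⁻¹ * k i ^ 2 :=
        geom_mean_le_arith_mean_weighted _ _ _ (fun _ _ => by positivity)
          (by simp [Finset.card_univ]) (fun _ _ => sq_nonneg _)
    _ ≤ ∑ i, k i ^ 2 := Finset.sum_le_sum fun i _ =>
        mul_le_of_le_one_left (sq_nonneg _) (inv_le_one_of_one_le₀ hn)

lemma integrand_le_of_sum_sq_le_one [Nonempty ι] {k : ι → ℝ} (hk : ∀ i, k i ≠ 0)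
    (hS : ∑ i, k i ^ 2 ≤ 1) :
    integrand k ≤ ∏ i, singularWeight (2 / Fintype.card ι) (k i) := by
  unfold integrand
  set S := ∑ i, k i ^ 2
  have hS0 : 0 < S := Finset.sum_pos (fun i _ => by have := hk i; positivity) Finset.univ_nonempty
  have hP : ∏ i, cubicDecay (k i) ≤ 1 :=
    Finset.prod_le_one (fun i _ => (cubicDecay_pos _).le) fun i _ => cubicDecay_le_one _
  have hcoord (i : ι) : |k i| ≤ 1 := (sq_le_one_iff_abs_le_one _).1 <|
    (Finset.single_le_sum (fun j _ => sq_nonneg (k j)) (Finset.mem_univ i)).trans hS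
  calc S * (∏ i, cubicDecay (k i)) / (min 1 S) ^ 2 ≤ S * 1 / S ^ 2 := by
        rw [min_eq_right hS]; gcongr
    _ = S⁻¹ := by field_simp
    _ ≤ (∏ i, |k i| ^ (2 / Fintype.card ι : ℝ))⁻¹ :=
        inv_anti₀ (Finset.prod_pos fun i _ => by have := abs_pos.2 (hk i); positivity)
          (prod_abs_rpow_le_sum_sq k)
    _ = ∏ i, singularWeight (2 / Fintype.card ι) (k i) := by
        rw [← Finset.prod_inv_distrib]
        refine Finset.prod_congr rfl fun i _ => ?_
        rw [singularWeight_of_abs_le_one _ (hcoord i), rpow_neg (abs_nonneg _)]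

lemma integrand_of_one_le_sum_sq {k : ι → ℝ} (hS : 1 ≤ ∑ i, k i ^ 2) :
    integrand k = ∑ i, k i ^ 2 * ∏ j, cubicDecay (k j) := by
  rw [integrand, min_eq_left hS, one_pow, div_one, Finset.sum_mul]

lemma ae_integrand_le [Nonempty ι] :
    ∀ᵐ k : ι → ℝ, integrand k ≤ ∏ i, singularWeight (2 / Fintype.card ι) (k i) + ∑ i, k i ^ 2 * ∏ j, cubicDecay (k j) := by
  have hae : ∀ᵐ k : ι → ℝ, ∀ i, k i ≠ 0 := by
    rw [volume_pi]
    exact ae_all_iff.2 fun i => Measure.ae_eval_ne _ i 0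
  filter_upwards [hae] with k hk
  have hG : 0 ≤ ∏ i, singularWeight (2 / Fintype.card ι) (k i) :=
    Finset.prod_nonneg fun i _ => singularWeight_nonneg _ _
  have hH : 0 ≤ ∑ i, k i ^ 2 * ∏ j, cubicDecay (k j) :=
    Finset.sum_nonneg fun i _ => by
      have := Finset.prod_nonneg fun j (_ : j ∈ Finset.univ) => (cubicDecay_pos (k j)).le
      positivity
  rcases le_total (∑ i, k i ^ 2) 1 with hS | hS
  · linarith [integrand_le_of_sum_sq_le_one hk hS]
  · linarith [integrand_of_one_le_sum_sq hS]

lemma integral_prod_singularWeight {e : ℝ} (he : e < 1) :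
    ∫ k : ι → ℝ, ∏ i, singularWeight e (k i) = (2 / (1 - e)) ^ Fintype.card ι := by
  rw [integral_fintype_prod_volume_eq_pow, integral_singularWeight he]

lemma setIntegral_pi_Icc_sq_mul_prod_cubicDecay {M : ℝ} (hM : 1 ≤ M) (i : ι) :
    ∫ k in univ.pi fun _ : ι => Icc (-M) M, k i ^ 2 * ∏ j, cubicDecay (k j) =
      (2 / 3 + 2 * log M) * (3 - (M ^ 2)⁻¹) ^ (Fintype.card ι - 1) := by
  classical
  have hfactor (k : ι → ℝ) : k i ^ 2 * ∏ j, cubicDecay (k j) =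
      ∏ j, (if j = i then fun t => t ^ 2 * cubicDecay t else cubicDecay) (k j) := by
    rw [Fintype.prod_eq_mul_prod_compl i, Fintype.prod_eq_mul_prod_compl i, if_pos rfl, mul_assoc]
    congr 2
    exact Finset.prod_congr rfl fun j hj => by
      rw [if_neg (by simpa using hj)]
  simp_rw [hfactor]
  rw [volume_pi, Measure.restrict_pi_pi, integral_fintype_prod_eq_prod,
    Fintype.prod_eq_mul_prod_compl i, if_pos rfl, integral_Icc_sq_mul_cubicDecay hM,
    Finset.prod_congr rfl fun j hj => by rw [if_neg (by simpa using hj)],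
    integral_Icc_cubicDecay hM, Finset.prod_const, Finset.card_compl, Finset.card_singleton]

lemma setIntegral_pi_Icc_integrand_le (hι : 2 < Fintype.card ι) {M : ℝ} (hM : 1 ≤ M) :
    ∫ k in univ.pi fun _ : ι => Icc (-M) M, integrand k ≤
      (2 / (1 - 2 / Fintype.card ι)) ^ Fintype.card ι +
        Fintype.card ι * 3 ^ (Fintype.card ι - 1) * (2 / 3 + 2 * log M) := by
  have : Nonempty ι := Fintype.card_pos_iff.1 (by omega)
  set n := Fintype.card ι
  set B := univ.pi fun _ : ι => Icc (-M) M
  have he : 2 / (n : ℝ) < 1 := by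
    rw [div_lt_one (by positivity)]
    exact_mod_cast hι
  have hG : Integrable fun k : ι → ℝ => ∏ i, singularWeight (2 / n) (k i) :=
    Integrable.fintype_prod fun _ => integrable_singularWeight he
  have hH (i : ι) : IntegrableOn (fun k : ι → ℝ => k i ^ 2 * ∏ j, cubicDecay (k j)) B :=
    ContinuousOn.integrableOn_compact (isCompact_univ_pi fun _ => isCompact_Icc) <|
      (((continuous_apply i).pow 2).mul <| continuous_finsetProd _ fun j _ =>
        continuous_cubicDecay.comp (continuous_apply j)).continuousOn
  calc _ ≤ ∫ k in B, (∏ i, singularWeight (2 / n) (k i) +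
          ∑ i, k i ^ 2 * ∏ j, cubicDecay (k j)) :=
        integral_mono_of_nonneg (ae_of_all _ integrand_nonneg) (hG.integrableOn.add (integrable_finsetSum _ fun i _ => hH i))
          (ae_restrict_of_ae ae_integrand_le)
    _ = (∫ k in B, ∏ i, singularWeight (2 / n) (k i)) +
          ∑ i, ∫ k in B, k i ^ 2 * ∏ j, cubicDecay (k j) := by
        rw [integral_add hG.integrableOn (integrable_finsetSum _ fun i _ => hH i),
          integral_finsetSum _ fun i _ => hH i]
    _ ≤ (2 / (1 - 2 / n)) ^ n + ∑ _i : ι, 3 ^ (n - 1) * (2 / 3 + 2 * log M) := by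
        gcongr with i
        · exact (setIntegral_le_integral hG (ae_of_all _ fun k =>
            Finset.prod_nonneg fun i _ => singularWeight_nonneg _ _)).trans_eq
            (integral_prod_singularWeight he)
        · rw [setIntegral_pi_Icc_sq_mul_prod_cubicDecay hM, mul_comm]
          have : 0 ≤ 2 / 3 + 2 * log M := by linarith [log_nonneg hM]
          gcongr
          all_goals linarith [inv_pos.2 (by positivity : 0 < M ^ 2),
            inv_le_one_of_one_le₀ (one_le_pow₀ hM : 1 ≤ M ^ 2)]
    _ = _ := by simp [n, mul_assoc]

end Box

lemma log_add_half_mul_pi_le {x : ℝ} (hx : 2 ≤ x) : log ((x + 1 / 2) * π) ≤ 4 * log x := by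
  rw [show (4 : ℝ) * log x = log (x ^ 4) by rw [log_pow]; norm_num]
  refine log_le_log (by positivity) ?_
  calc (x + 1 / 2) * π ≤ (x + 1 / 2) * 4 := by gcongr; exact pi_le_four
    _ ≤ x ^ 4 := by nlinarith [pow_le_pow_left₀ zero_le_two hx 3]

theorem integral_inside_box_log_bound (d : ℕ) (hd : 2 < d) :
    ∃ C : ℝ, ∀ L : ℕ, 2 ≤ L →
      (∫ k in (Set.univ.pi fun _ : Fin d =>
          Set.Icc (-(((L : ℝ) + 1 / 2) * Real.pi)) (((L : ℝ) + 1 / 2) * Real.pi)),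
        (∑ j, (k j) ^ 2) * (∏ j, ((max 1 |k j|) ^ 3)⁻¹) /
          (min 1 (∑ j, (k j) ^ 2)) ^ 2) ≤ C * Real.log L := by
  set A : ℝ := (2 / (1 - 2 / d)) ^ d
  set B : ℝ := d * 3 ^ (d - 1)
  have hA : 0 ≤ A := pow_nonneg (div_nonneg zero_le_two (sub_nonneg.2
    ((div_le_one (by positivity)).2 (by exact_mod_cast hd.le)))) d
  have hB : 0 ≤ B := by positivity
  refine ⟨(A + B) / log 2 + 8 * B, fun L hL => ?_⟩
  have hL : (2 : ℝ) ≤ L := by exact_mod_cast hL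
  have hbox := setIntegral_pi_Icc_integrand_le (ι := Fin d) (by simpa) (M := (L + 1 / 2) * π)
    (by nlinarith [pi_gt_three])
  simp only [Fintype.card_fin] at hbox
  have hlogM := log_add_half_mul_pi_le hL
  have hAB : A + B ≤ (A + B) / log 2 * log L := by
    rw [div_mul_eq_mul_div, le_div_iff₀ (log_pos one_lt_two)]
    gcongr
  calc _ ≤ A + B * (2 / 3 + 2 * log ((L + 1 / 2) * π)) := hbox
    _ ≤ _ := by nlinarith [mul_le_mul_of_nonneg_left hlogM hB]
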